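/- arXiv:2308.08390 — 5 statements merged into one kernel-verified Lean document; each statement's English description precedes it below -/
import Mathlib

section
/- Under instrument exclusion, random assignment, and monotonicity, for every Borel set B: ℙ(Y ∈ B, D = d_max | Z = z) ≤ ℙ(Y ∈ B, D = d_max | Z = z'), where d_max is the maximum value of the treatment. That is, the joint probability of the outcome lying in B and taking the maximal treatment is monotone increasing in the instrument. -/
/-!
By random assignment, conditioning on `Z = z` does not change the law of the potential variables,
so `ℙ(Y ∈ B, D = d_max | Z = z) = ℙ(Y_{d_max} ∈ B, D_z = d_max)`, and likewise for `z'`.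
Since `D_{z'}` is at most `d_max` and, by monotonicity, at least `D_z`, the event `D_z = d_max`
is almost surely contained in `D_{z'} = d_max`.
-/

open MeasureTheory ProbabilityTheory Set

namespace ProbabilityTheory.IndepFun

variable {Ω α β : Type*} {_ : MeasurableSpace Ω} {μ : Measure Ω} [IsFiniteMeasure μ]
  [MeasurableSpace α] [MeasurableSpace β] {Z : Ω → α} {W : Ω → β} {T : Set α} {S : Set β}

lemma measureReal_inter_preimage_div_eq (h : IndepFun Z W μ) (hT : MeasurableSet T)
    (hS : MeasurableSet S) (hT₀ : μ (Z ⁻¹' T) ≠ 0) :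
    μ.real (Z ⁻¹' T ∩ W ⁻¹' S) / μ.real (Z ⁻¹' T) = μ.real (W ⁻¹' S) := by
  have hT₀' : μ.real (Z ⁻¹' T) ≠ 0 := (measureReal_ne_zero_iff).2 hT₀
  rw [measureReal_def, h.measure_inter_preimage_eq_mul _ _ hT hS, ENNReal.toReal_mul,
    ← measureReal_def, ← measureReal_def, mul_div_cancel_left₀ _ hT₀']

lemma measureReal_inter_preimage_div_le (h : IndepFun Z W μ) (hT : MeasurableSet T)
    (hS : MeasurableSet S) :
    μ.real (Z ⁻¹' T ∩ W ⁻¹' S) / μ.real (Z ⁻¹' T) ≤ μ.real (W ⁻¹' S) := by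
  rcases eq_or_ne (μ (Z ⁻¹' T)) 0 with hT₀ | hT₀
  · simp [measureReal_def, hT₀]
  · exact (h.measureReal_inter_preimage_div_eq hT hS hT₀).le

end ProbabilityTheory.IndepFun

section PotentialOutcomes

variable {Ω α β δ : Type*}

lemma setOf_mem_and_eq_and_eq_eq_preimage_inter {Y : Ω → β} {Yp : δ → Ω → β} {D Dz : Ω → δ}
    {Z : Ω → α} {z : α} (hD : ∀ ω, Z ω = z → D ω = Dz ω) (hY : ∀ ω, Y ω = Yp (D ω) ω) (B : Set β) (d : δ) :
    {ω | Y ω ∈ B ∧ D ω = d ∧ Z ω = z} = Z ⁻¹' {z} ∩ {ω | Yp d ω ∈ B ∧ Dz ω = d} := by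
  ext ω
  simp only [mem_ofPred_eq, mem_inter_iff, mem_preimage, mem_singleton_iff]
  constructor
  · rintro ⟨hYB, rfl, hZ⟩
    exact ⟨hZ, hY ω ▸ hYB, (hD ω hZ).symm⟩
  · rintro ⟨hZ, hYB, hDz⟩
    have hDd : D ω = d := (hD ω hZ).trans hDz
    exact ⟨hY ω ▸ hDd ▸ hYB, hDd, hZ⟩

lemma measureReal_mem_and_eq_top_mono [MeasurableSpace Ω] {μ : Measure Ω} [IsFiniteMeasure μ]
    [PartialOrder δ] {Y : Ω → β} {X X' : Ω → δ} {B : Set β} {m : δ} (hX' : ∀ ω, X' ω ≤ m)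
    (hle : X ≤ᵐ[μ] X') :
    μ.real {ω | Y ω ∈ B ∧ X ω = m} ≤ μ.real {ω | Y ω ∈ B ∧ X' ω = m} := by
  refine ENNReal.toReal_mono (measure_ne_top _ _) (measure_mono_ae ?_)
  filter_upwards [hle] with ω hXX' ⟨hYB, hXm⟩
  exact ⟨hYB, le_antisymm (hX' ω) (hXm ▸ hXX')⟩

end PotentialOutcomes

theorem stmt1_general {Ω : Type*} [MeasureSpace Ω] [IsProbabilityMeasure (ℙ : Measure Ω)]
    {α : Type*} [MeasurableSpace α] [MeasurableSingletonClass α]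
    (𝒟 : Finset ℝ) (h𝒟 : 𝒟.Nonempty)
    (Yp : ℝ → Ω → ℝ)            -- potential outcomes Y_d (exclusion already imposed)
    (Dz Dz' : Ω → ℝ)            -- potential treatments
    (Z : Ω → α) (z z' : α)
    (hDz'val : ∀ ω, Dz' ω ∈ 𝒟)
    (hz'pos : 0 < ℙ {ω | Z ω = z'})
    -- random assignment: Z jointly independent of all potential variables
    (hindep : IndepFun Z (fun ω => ((fun d : ℝ => Yp d ω), Dz ω, Dz' ω)) ℙ)
    -- monotonicity
    (hmono : ∀ᵐ ω ∂(ℙ : Measure Ω), Dz ω ≤ Dz' ω)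
    (D Y : Ω → ℝ)
    (hDonz : ∀ ω, Z ω = z → D ω = Dz ω)
    (hDonz' : ∀ ω, Z ω = z' → D ω = Dz' ω)
    (hY : ∀ ω, Y ω = Yp (D ω) ω) :
    ∀ B : Set ℝ, MeasurableSet B →
      (ℙ {ω | Y ω ∈ B ∧ D ω = 𝒟.max' h𝒟 ∧ Z ω = z}).toReal / (ℙ {ω | Z ω = z}).toReal ≤
      (ℙ {ω | Y ω ∈ B ∧ D ω = 𝒟.max' h𝒟 ∧ Z ω = z'}).toReal / (ℙ {ω | Z ω = z'}).toReal := by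
  intro B hB
  set m := 𝒟.max' h𝒟
  have hS : MeasurableSet {p : (ℝ → ℝ) × ℝ × ℝ | p.1 m ∈ B ∧ p.2.1 = m} := by
    measurability
  have hS' : MeasurableSet {p : (ℝ → ℝ) × ℝ × ℝ | p.1 m ∈ B ∧ p.2.2 = m} := by
    measurability
  change volume.real _ / volume.real (Z ⁻¹' {z}) ≤ volume.real _ / volume.real (Z ⁻¹' {z'})
  rw [setOf_mem_and_eq_and_eq_eq_preimage_inter hDonz hY, setOf_mem_and_eq_and_eq_eq_preimage_inter hDonz' hY]
  calc _ ≤ volume.real {ω | Yp m ω ∈ B ∧ Dz ω = m} :=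
        hindep.measureReal_inter_preimage_div_le (measurableSet_singleton z) hS
    _ ≤ volume.real {ω | Yp m ω ∈ B ∧ Dz' ω = m} :=
        measureReal_mem_and_eq_top_mono (fun ω => 𝒟.le_max' _ (hDz'val ω)) hmono
    _ = _ := (hindep.measureReal_inter_preimage_div_eq (measurableSet_singleton z') hS'
        hz'pos.ne').symm

/-- Under exclusion, random assignment, and monotonicity,
for every Borel set `B`, `ℙ(Y ∈ B, D = d_max | Z = z) ≤ ℙ(Y ∈ B, D = d_max | Z = z')`. -/
theorem stmt1 {Ω : Type*} [MeasureSpace Ω] [IsProbabilityMeasure (ℙ : Measure Ω)]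
    {α : Type*} [MeasurableSpace α] [MeasurableSingletonClass α]
    (𝒟 : Finset ℝ) (h𝒟 : 𝒟.Nonempty)
    (Yp : ℝ → Ω → ℝ)            -- potential outcomes Y_d (exclusion already imposed)
    (Dz Dz' : Ω → ℝ)            -- potential treatments
    (Z : Ω → α) (z z' : α)
    (hDzval : ∀ ω, Dz ω ∈ 𝒟) (hDz'val : ∀ ω, Dz' ω ∈ 𝒟)
    (hYp : ∀ d, Measurable (Yp d)) (hDz : Measurable Dz) (hDz' : Measurable Dz')
    (hZ : Measurable Z)
    (hzpos : 0 < ℙ {ω | Z ω = z}) (hz'pos : 0 < ℙ {ω | Z ω = z'})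
    -- random assignment: Z jointly independent of all potential variables
    (hindep : IndepFun Z (fun ω => ((fun d : ℝ => Yp d ω), Dz ω, Dz' ω)) ℙ)
    -- monotonicity
    (hmono : ∀ᵐ ω ∂(ℙ : Measure Ω), Dz ω ≤ Dz' ω)
    (D Y : Ω → ℝ)
    (hDonz : ∀ ω, Z ω = z → D ω = Dz ω)
    (hDonz' : ∀ ω, Z ω = z' → D ω = Dz' ω)
    (hY : ∀ ω, Y ω = Yp (D ω) ω) :
    ∀ B : Set ℝ, MeasurableSet B →
      (ℙ {ω | Y ω ∈ B ∧ D ω = 𝒟.max' h𝒟 ∧ Z ω = z}).toReal / (ℙ {ω | Z ω = z}).toReal ≤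
      (ℙ {ω | Y ω ∈ B ∧ D ω = 𝒟.max' h𝒟 ∧ Z ω = z'}).toReal / (ℙ {ω | Z ω = z'}).toReal :=
  stmt1_general 𝒟 h𝒟 Yp Dz Dz' Z z z' hDz'val hz'pos hindep hmono D Y hDonz hDonz' hY
end

section
/- Under instrument exclusion, random assignment, and monotonicity, for every Borel set B: ℙ(Y ∈ B, D = d_min | Z = z) ≥ ℙ(Y ∈ B, D = d_min | Z = z'), where d_min is the minimum value of the treatment. -/
open MeasureTheory ProbabilityTheory Set

/-!
Write `dₘ` for the minimum of `𝒟`. On `{Z = z}` the event `{Y ∈ B, D = dₘ}` is `{Y_{dₘ} ∈ B, D_z = dₘ}`,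
and on `{Z = z'}` it is `{Y_{dₘ} ∈ B, D_{z'} = dₘ}`. By random assignment, conditioning on `Z` does not
change the probabilities of these events in the potential variables. Monotonicity gives
`D_z ≤ D_{z'}`, so `D_{z'} = dₘ` forces `D_z = dₘ`, whence the second event is (a.s.) contained in the first.
-/

namespace ProbabilityTheory

variable {Ω α β : Type*} [MeasurableSpace Ω] [MeasurableSpace α] [MeasurableSpace β]
  {μ : Measure Ω} [IsFiniteMeasure μ] {Z : Ω → α} {W : Ω → β} {A : Set α} {S : Set β}

theorem IndepFun.toReal_measure_inter_preimage_div_eq (h : IndepFun Z W μ)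
    (hA : MeasurableSet A) (hS : MeasurableSet S) (hA₀ : μ (Z ⁻¹' A) ≠ 0) :
    (μ (Z ⁻¹' A ∩ W ⁻¹' S)).toReal / (μ (Z ⁻¹' A)).toReal = (μ (W ⁻¹' S)).toReal := by
  have hA₀' : (μ (Z ⁻¹' A)).toReal ≠ 0 := ENNReal.toReal_ne_zero.mpr ⟨hA₀, measure_ne_top _ _⟩
  rw [h.measure_inter_preimage_eq_mul _ _ hA hS, ENNReal.toReal_mul, mul_div_cancel_left₀ _ hA₀']

theorem IndepFun.toReal_measure_inter_preimage_div_le (h : IndepFun Z W μ)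
    (hA : MeasurableSet A) (hS : MeasurableSet S) :
    (μ (Z ⁻¹' A ∩ W ⁻¹' S)).toReal / (μ (Z ⁻¹' A)).toReal ≤ (μ (W ⁻¹' S)).toReal := by
  by_cases hA₀ : μ (Z ⁻¹' A) = 0
  · simp [hA₀]
  · exact (h.toReal_measure_inter_preimage_div_eq hA hS hA₀).le

end ProbabilityTheory

theorem setOf_outcome_mem_and_treatment_eq_and_instrument_eq {Ω α δ γ : Type*}
    {Yp : δ → Ω → γ} {D Dz : Ω → δ} {Y : Ω → γ} {Z : Ω → α} {z : α}
    (hD : ∀ ω, Z ω = z → D ω = Dz ω) (hY : ∀ ω, Y ω = Yp (D ω) ω) (B : Set γ) (d : δ) :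
    {ω | Y ω ∈ B ∧ D ω = d ∧ Z ω = z} = Z ⁻¹' {z} ∩ {ω | Yp d ω ∈ B ∧ Dz ω = d} := by
  ext ω
  simp only [mem_ofPred_eq, mem_inter_iff, mem_preimage, mem_singleton_iff]
  constructor
  · rintro ⟨hYB, rfl, hz⟩
    exact ⟨hz, hY ω ▸ hYB, (hD ω hz).symm⟩
  · rintro ⟨hz, hYB, hDz⟩
    have hDd : D ω = d := (hD ω hz).trans hDz
    exact ⟨hY ω ▸ hDd ▸ hYB, hDd, hz⟩

theorem measure_outcome_mem_and_eq_min_le {Ω δ γ : Type*} [MeasurableSpace Ω]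
    [PartialOrder δ] {μ : Measure Ω} {Yp : δ → Ω → γ} {Dz Dz' : Ω → δ} {d : δ}
    (hmin : ∀ ω, d ≤ Dz ω) (hmono : ∀ᵐ ω ∂μ, Dz ω ≤ Dz' ω) (B : Set γ) :
    μ {ω | Yp d ω ∈ B ∧ Dz' ω = d} ≤ μ {ω | Yp d ω ∈ B ∧ Dz ω = d} := by
  refine measure_mono_ae ?_
  filter_upwards [hmono] with ω hω ⟨hYB, hDz'⟩
  exact ⟨hYB, le_antisymm (hDz' ▸ hω) (hmin ω)⟩

theorem stmt2_general {Ω : Type*} [MeasureSpace Ω] [IsProbabilityMeasure (ℙ : Measure Ω)]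
    {α : Type*} [MeasurableSpace α] [MeasurableSingletonClass α]
    (𝒟 : Finset ℝ) (h𝒟 : 𝒟.Nonempty)
    (Yp : ℝ → Ω → ℝ)            -- potential outcomes Y_d (exclusion already imposed)
    (Dz Dz' : Ω → ℝ)            -- potential treatments
    (Z : Ω → α) (z z' : α)
    (hDzval : ∀ ω, Dz ω ∈ 𝒟)
    (hzpos : 0 < ℙ {ω | Z ω = z})
    -- random assignment: Z jointly independent of all potential variables
    (hindep : IndepFun Z (fun ω => ((fun d : ℝ => Yp d ω), Dz ω, Dz' ω)) ℙ)
    -- monotonicity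
    (hmono : ∀ᵐ ω ∂(ℙ : Measure Ω), Dz ω ≤ Dz' ω)
    (D Y : Ω → ℝ)
    (hDonz : ∀ ω, Z ω = z → D ω = Dz ω)
    (hDonz' : ∀ ω, Z ω = z' → D ω = Dz' ω)
    (hY : ∀ ω, Y ω = Yp (D ω) ω) :
    ∀ B : Set ℝ, MeasurableSet B →
      (ℙ {ω | Y ω ∈ B ∧ D ω = 𝒟.min' h𝒟 ∧ Z ω = z'}).toReal / (ℙ {ω | Z ω = z'}).toReal ≤
      (ℙ {ω | Y ω ∈ B ∧ D ω = 𝒟.min' h𝒟 ∧ Z ω = z}).toReal / (ℙ {ω | Z ω = z}).toReal := by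
  intro B hB
  set dₘ := 𝒟.min' h𝒟
  have hYB : MeasurableSet {p : (ℝ → ℝ) × ℝ × ℝ | p.1 dₘ ∈ B} :=
    (measurable_pi_apply dₘ).comp measurable_fst hB
  have hSz : MeasurableSet {p : (ℝ → ℝ) × ℝ × ℝ | p.1 dₘ ∈ B ∧ p.2.1 = dₘ} :=
    hYB.inter (measurable_fst.comp measurable_snd (measurableSet_singleton dₘ))
  have hSz' : MeasurableSet {p : (ℝ → ℝ) × ℝ × ℝ | p.1 dₘ ∈ B ∧ p.2.2 = dₘ} :=
    hYB.inter (measurable_snd.comp measurable_snd (measurableSet_singleton dₘ))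
  rw [setOf_outcome_mem_and_treatment_eq_and_instrument_eq hDonz hY,
    setOf_outcome_mem_and_treatment_eq_and_instrument_eq hDonz' hY]
  -- the events in the potential variables below are, definitionally, preimages of the sets in `hSz`, `hSz'`
  calc _ ≤ (ℙ {ω | Yp dₘ ω ∈ B ∧ Dz' ω = dₘ}).toReal :=
        hindep.toReal_measure_inter_preimage_div_le (measurableSet_singleton z') hSz'
    _ ≤ (ℙ {ω | Yp dₘ ω ∈ B ∧ Dz ω = dₘ}).toReal := ENNReal.toReal_mono (measure_ne_top _ _)
        (measure_outcome_mem_and_eq_min_le (fun ω => 𝒟.min'_le _ (hDzval ω)) hmono B)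
    _ = _ := (hindep.toReal_measure_inter_preimage_div_eq (measurableSet_singleton z) hSz
        hzpos.ne').symm

/-- Under exclusion, random assignment, and monotonicity,
for every Borel set `B`, `ℙ(Y ∈ B, D = d_min | Z = z) ≥ ℙ(Y ∈ B, D = d_min | Z = z')`. -/
theorem stmt2 {Ω : Type*} [MeasureSpace Ω] [IsProbabilityMeasure (ℙ : Measure Ω)]
    {α : Type*} [MeasurableSpace α] [MeasurableSingletonClass α]
    (𝒟 : Finset ℝ) (h𝒟 : 𝒟.Nonempty)
    (Yp : ℝ → Ω → ℝ)            -- potential outcomes Y_d (exclusion already imposed)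
    (Dz Dz' : Ω → ℝ)            -- potential treatments
    (Z : Ω → α) (z z' : α)
    (hDzval : ∀ ω, Dz ω ∈ 𝒟) (hDz'val : ∀ ω, Dz' ω ∈ 𝒟)
    (hYp : ∀ d, Measurable (Yp d)) (hDz : Measurable Dz) (hDz' : Measurable Dz')
    (hZ : Measurable Z)
    (hzpos : 0 < ℙ {ω | Z ω = z}) (hz'pos : 0 < ℙ {ω | Z ω = z'})
    -- random assignment: Z jointly independent of all potential variables
    (hindep : IndepFun Z (fun ω => ((fun d : ℝ => Yp d ω), Dz ω, Dz' ω)) ℙ)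
    -- monotonicity
    (hmono : ∀ᵐ ω ∂(ℙ : Measure Ω), Dz ω ≤ Dz' ω)
    (D Y : Ω → ℝ)
    (hDonz : ∀ ω, Z ω = z → D ω = Dz ω)
    (hDonz' : ∀ ω, Z ω = z' → D ω = Dz' ω)
    (hY : ∀ ω, Y ω = Yp (D ω) ω) :
    ∀ B : Set ℝ, MeasurableSet B →
      (ℙ {ω | Y ω ∈ B ∧ D ω = 𝒟.min' h𝒟 ∧ Z ω = z'}).toReal / (ℙ {ω | Z ω = z'}).toReal ≤
      (ℙ {ω | Y ω ∈ B ∧ D ω = 𝒟.min' h𝒟 ∧ Z ω = z}).toReal / (ℙ {ω | Z ω = z}).toReal :=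
  stmt2_general 𝒟 h𝒟 Yp Dz Dz' Z z z' hDzval hzpos hindep hmono D Y hDonz hDonz' hY
end

section
/- Full instrument monotonicity for a multi-dimensional instrument implies partial instrument monotonicity, but not conversely: there exist potential treatments D_z, z ∈ {0,1}², satisfying partial monotonicity (monotone in each coordinate with the other fixed) but for which neither D_{(1,0)} ≥ D_{(0,1)} a.s. nor D_{(0,1)} ≥ D_{(1,0)} a.s. holds. -/
open MeasureTheory ProbabilityTheory Set

/-!
Full monotonicity compares every pair of instrument values, in particular the pairs differing in
one coordinate. For the converse, take a fair coin `ω` and a unit that takes the treatment exactly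
when the instrument selected by the coin is switched on: `D_z(ω) = z_ω`. Every `D_z(ω)` is monotone
in `z`, but `D_{(1,0)}` and `D_{(0,1)}` disagree in opposite directions on the two outcomes of the
coin, each of which has probability `1/2`.
-/

lemma ae_uniformOn_univ {Ω : Type*} [MeasurableSpace Ω] [MeasurableSingletonClass Ω] [Finite Ω] :
    ae (uniformOn (univ : Set Ω)) = ⊤ :=
  ae_eq_top.2 fun ω => by simp [uniformOn_eq_zero_iff finite_univ]

noncomputable def coinComplier (z : Bool × Bool) (ω : Bool) : ℝ :=
  if cond ω z.1 z.2 then 1 else 0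

lemma monotone_coinComplier (ω : Bool) : Monotone fun z => coinComplier z ω := by
  have hindicator : Monotone fun b : Bool => if b then (1 : ℝ) else 0 := by
    rintro (_ | _) (_ | _) h <;> simp_all [Bool.le_iff_imp]
  cases ω
  exacts [hindicator.comp monotone_snd, hindicator.comp monotone_fst]

lemma coinComplier_false :
    coinComplier (true, false) false < coinComplier (false, true) false := by
  simp [coinComplier]

lemma coinComplier_true :
    coinComplier (false, true) true < coinComplier (true, false) true := by
  simp [coinComplier]

/-- Full monotonicity implies partial monotonicity, but not conversely:
there is a probability space and potential treatments `D_z`, `z ∈ {0,1}²`, satisfying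
partial monotonicity but with neither `D_{(1,0)} ≥ D_{(0,1)}` a.s. nor
`D_{(0,1)} ≥ D_{(1,0)}` a.s. -/
theorem stmt9 :
    -- (i) full monotonicity implies partial monotonicity
    (∀ (Ω : Type) (_ : MeasureSpace Ω) (_ : IsProbabilityMeasure (ℙ : Measure Ω))
        (D : Bool × Bool → Ω → ℝ),
      (∀ z z' : Bool × Bool,
          (∀ᵐ ω ∂(ℙ : Measure Ω), D z ω ≤ D z' ω) ∨
          (∀ᵐ ω ∂(ℙ : Measure Ω), D z' ω ≤ D z ω)) →
      ((∀ z₂ : Bool,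
          (∀ᵐ ω ∂(ℙ : Measure Ω), D (false, z₂) ω ≤ D (true, z₂) ω) ∨
          (∀ᵐ ω ∂(ℙ : Measure Ω), D (true, z₂) ω ≤ D (false, z₂) ω)) ∧
       (∀ z₁ : Bool,
          (∀ᵐ ω ∂(ℙ : Measure Ω), D (z₁, false) ω ≤ D (z₁, true) ω) ∨
          (∀ᵐ ω ∂(ℙ : Measure Ω), D (z₁, true) ω ≤ D (z₁, false) ω)))) ∧
    -- (ii) the converse fails
    (∃ (Ω : Type) (_ : MeasureSpace Ω) (_ : IsProbabilityMeasure (ℙ : Measure Ω))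
        (D : Bool × Bool → Ω → ℝ),
      ((∀ z₂ : Bool, ∀ᵐ ω ∂(ℙ : Measure Ω), D (false, z₂) ω ≤ D (true, z₂) ω) ∧
       (∀ z₁ : Bool, ∀ᵐ ω ∂(ℙ : Measure Ω), D (z₁, false) ω ≤ D (z₁, true) ω)) ∧
      ¬ (∀ᵐ ω ∂(ℙ : Measure Ω), D (false, true) ω ≤ D (true, false) ω) ∧
      ¬ (∀ᵐ ω ∂(ℙ : Measure Ω), D (true, false) ω ≤ D (false, true) ω)) := by
  refine ⟨fun Ω _ _ D hfull => ⟨fun z₂ => hfull _ _, fun z₁ => hfull _ _⟩, ?_⟩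
  let coin : MeasureSpace Bool := ⟨uniformOn univ⟩
  have hcoin : IsProbabilityMeasure (ℙ : Measure Bool) :=
    isProbabilityMeasure_uniformOn finite_univ univ_nonempty
  refine ⟨Bool, coin, hcoin, coinComplier, ?_⟩
  simp only [show ae (ℙ : Measure Bool) = ⊤ from ae_uniformOn_univ, Filter.eventually_top,
    not_forall, not_le]
  exact ⟨⟨fun _ ω => monotone_coinComplier ω ⟨Bool.false_le _, le_rfl⟩,
      fun _ ω => monotone_coinComplier ω ⟨le_rfl, Bool.false_le _⟩⟩,
    ⟨false, coinComplier_false⟩, ⟨true, coinComplier_true⟩⟩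
end

section
/- Under the partial IV validity assumption (exclusion, random assignment, and partial monotonicity in direction l with all other coordinates z_{-l} fixed), for all Borel sets B and the maximal treatment value d_max: ℙ(Y ∈ B, D = d_max | Z = (z_l^k, z_{-l})) ≤ ℙ(Y ∈ B, D = d_max | Z = (z_l^{k+1}, z_{-l})). -/
/-!
Random assignment makes `Z` independent of the potential variables, so conditioning on
`Z = z` leaves their law unchanged: on `{Z = z}` the observed event `{Y ∈ B, D = d_max}` is the
potential event `{Y_{d_max} ∈ B, D_z = d_max}`, and its conditional probability is the
unconditional probability of that potential event. Since `d_max` is the largest treatment value,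
`D_{za} = d_max` and `D_{za} ≤ D_{zb}` force `D_{zb} = d_max`, so the potential event grows from
`za` to `zb`.
-/

open MeasureTheory ProbabilityTheory Set

lemma ProbabilityTheory.IndepFun.toReal_measure_inter_preimage_div {Ω α β : Type*}
    {mΩ : MeasurableSpace Ω} [MeasurableSpace α] [MeasurableSpace β] {μ : Measure Ω}
    [IsFiniteMeasure μ] {X : Ω → α} {W : Ω → β} (h : IndepFun X W μ) {s : Set α} {t : Set β}
    (hs : MeasurableSet s) (ht : MeasurableSet t) (hX : μ (X ⁻¹' s) ≠ 0) :
    (μ (X ⁻¹' s ∩ W ⁻¹' t)).toReal / (μ (X ⁻¹' s)).toReal = (μ (W ⁻¹' t)).toReal := by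
  rw [h.measure_inter_preimage_eq_mul s t hs ht, ENNReal.toReal_mul,
    mul_div_cancel_left₀ _ (ENNReal.toReal_ne_zero.2 ⟨hX, measure_ne_top _ _⟩)]

lemma setOf_observed_eq_inter_potential {Ω V δ β : Type*} {Yp : δ → Ω → β} {Dp : V → Ω → δ}
    {Z : Ω → V} {D : Ω → δ} {Y : Ω → β} (hD : ∀ ω, D ω = Dp (Z ω) ω)
    (hY : ∀ ω, Y ω = Yp (D ω) ω) (B : Set β) (d : δ) (v : V) :
    {ω | Y ω ∈ B ∧ D ω = d ∧ Z ω = v} = Z ⁻¹' {v} ∩ {ω | Yp d ω ∈ B ∧ Dp v ω = d} := by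
  ext ω
  simp only [mem_ofPred_eq, mem_inter_iff, mem_preimage, mem_singleton_iff, hY, hD]
  constructor
  · rintro ⟨hy, hd, rfl⟩
    exact ⟨rfl, hd ▸ hy, hd⟩
  · rintro ⟨rfl, hy, hd⟩
    exact ⟨hd ▸ hy, hd, rfl⟩

lemma measurableSet_potentialEvent {V δ β : Type*} [MeasurableSpace δ]
    [MeasurableSingletonClass δ] [MeasurableSpace β] {B : Set β} (hB : MeasurableSet B)
    (d : δ) (v : V) :
    MeasurableSet {p : (δ → β) × (V → δ) | p.1 d ∈ B ∧ p.2 v = d} :=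
  (hB.preimage ((measurable_pi_apply d).comp measurable_fst)).inter
    ((measurableSet_singleton d).preimage ((measurable_pi_apply v).comp measurable_snd))

theorem stmt14_general {Ω : Type*} [MeasureSpace Ω] [IsProbabilityMeasure (ℙ : Measure Ω)]
    {L : ℕ} (𝒟 : Finset ℝ) (h𝒟 : 𝒟.Nonempty)
    (Yp : ℝ → Ω → ℝ)                      -- potential outcomes (exclusion imposed)
    (Dp : (Fin L → ℝ) → Ω → ℝ)            -- potential treatments
    (Z : Ω → (Fin L → ℝ))
    (za zb : Fin L → ℝ)       -- za = (z_l^k, z_{-l}), zb = (z_l^{k+1}, z_{-l})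
    (hval : ∀ v ω, Dp v ω ∈ 𝒟)
    (hzapos : 0 < ℙ {ω | Z ω = za}) (hzbpos : 0 < ℙ {ω | Z ω = zb})
    -- random assignment: Z jointly independent of all potential variables
    (hindep : IndepFun Z
      (fun ω => ((fun d : ℝ => Yp d ω), (fun v : Fin L → ℝ => Dp v ω))) ℙ)
    -- partial monotonicity
    (hmono : ∀ᵐ ω ∂(ℙ : Measure Ω), Dp za ω ≤ Dp zb ω)
    (D Y : Ω → ℝ)
    (hD : ∀ ω, D ω = Dp (Z ω) ω) (hY : ∀ ω, Y ω = Yp (D ω) ω) :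
    ∀ B : Set ℝ, MeasurableSet B →
      (ℙ {ω | Y ω ∈ B ∧ D ω = 𝒟.max' h𝒟 ∧ Z ω = za}).toReal / (ℙ {ω | Z ω = za}).toReal ≤
      (ℙ {ω | Y ω ∈ B ∧ D ω = 𝒟.max' h𝒟 ∧ Z ω = zb}).toReal / (ℙ {ω | Z ω = zb}).toReal := by
  intro B hB
  set dm := 𝒟.max' h𝒟
  have hcond : ∀ v, ℙ {ω | Z ω = v} ≠ 0 →
      (ℙ {ω | Y ω ∈ B ∧ D ω = dm ∧ Z ω = v}).toReal / (ℙ {ω | Z ω = v}).toReal =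
        (ℙ {ω | Yp dm ω ∈ B ∧ Dp v ω = dm}).toReal := fun v hv => by
    rw [setOf_observed_eq_inter_potential hD hY]
    exact hindep.toReal_measure_inter_preimage_div (measurableSet_singleton v)
      (measurableSet_potentialEvent hB dm v) hv
  have hle : ℙ {ω | Yp dm ω ∈ B ∧ Dp za ω = dm} ≤ ℙ {ω | Yp dm ω ∈ B ∧ Dp zb ω = dm} :=
    measure_mono_ae <| hmono.mono fun ω hω ⟨hy, hd⟩ =>
      ⟨hy, le_antisymm (𝒟.le_max' _ (hval zb ω)) (hd ▸ hω)⟩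
  rw [hcond za hzapos.ne', hcond zb hzbpos.ne']
  exact ENNReal.toReal_mono (measure_ne_top _ _) hle

/-- Under partial IV validity (exclusion, random assignment, and partial
monotonicity in direction `l` holding `z_{-l}` fixed), for all Borel `B`:
`ℙ(Y ∈ B, D = d_max | Z = (z_l^k, z_{-l})) ≤ ℙ(Y ∈ B, D = d_max | Z = (z_l^{k+1}, z_{-l}))`. -/
theorem stmt14 {Ω : Type*} [MeasureSpace Ω] [IsProbabilityMeasure (ℙ : Measure Ω)]
    {L : ℕ} (𝒟 : Finset ℝ) (h𝒟 : 𝒟.Nonempty)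
    (Yp : ℝ → Ω → ℝ)                      -- potential outcomes (exclusion imposed)
    (Dp : (Fin L → ℝ) → Ω → ℝ)            -- potential treatments
    (Z : Ω → (Fin L → ℝ))
    (l : Fin L) (za zb : Fin L → ℝ)       -- za = (z_l^k, z_{-l}), zb = (z_l^{k+1}, z_{-l})
    (hsame : ∀ j : Fin L, j ≠ l → za j = zb j)
    (hYp : ∀ d, Measurable (Yp d)) (hDp : ∀ v, Measurable (Dp v)) (hZ : Measurable Z)
    (hval : ∀ v ω, Dp v ω ∈ 𝒟)
    (hzapos : 0 < ℙ {ω | Z ω = za}) (hzbpos : 0 < ℙ {ω | Z ω = zb})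
    -- random assignment: Z jointly independent of all potential variables
    (hindep : IndepFun Z
      (fun ω => ((fun d : ℝ => Yp d ω), (fun v : Fin L → ℝ => Dp v ω))) ℙ)
    -- partial monotonicity
    (hmono : ∀ᵐ ω ∂(ℙ : Measure Ω), Dp za ω ≤ Dp zb ω)
    (D Y : Ω → ℝ)
    (hD : ∀ ω, D ω = Dp (Z ω) ω) (hY : ∀ ω, Y ω = Yp (D ω) ω) :
    ∀ B : Set ℝ, MeasurableSet B →
      (ℙ {ω | Y ω ∈ B ∧ D ω = 𝒟.max' h𝒟 ∧ Z ω = za}).toReal / (ℙ {ω | Z ω = za}).toReal ≤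
      (ℙ {ω | Y ω ∈ B ∧ D ω = 𝒟.max' h𝒟 ∧ Z ω = zb}).toReal / (ℙ {ω | Z ω = zb}).toReal :=
  stmt14_general 𝒟 h𝒟 Yp Dp Z za zb hval hzapos hzbpos hindep hmono D Y hD hY
end

section
/- Under the same partial IV validity assumption, for all c ∈ ℝ: ℙ(D ≤ c | Z = (z_l^k, z_{-l})) ≥ ℙ(D ≤ c | Z = (z_l^{k+1}, z_{-l})). In other words, an increase in the l-th coordinate of the instrument (holding others fixed) yields a first-order stochastically larger conditional distribution of the treatment. -/
open MeasureTheory ProbabilityTheory Set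

section PotentialOutcomes

variable {Ω ι : Type*} [MeasurableSpace Ω] {μ : Measure Ω} [MeasurableSpace ι]
  [MeasurableSingletonClass ι] {Z : Ω → ι} {Dp : ι → Ω → ℝ} {D : Ω → ℝ} {s : Set ℝ}

/-- On `{Z = v}` the observed treatment is the potential treatment `Dp v`, which is
independent of `Z`. -/
theorem measure_observed_inter_eq_mul
    (hindep : IndepFun Z (fun ω v => Dp v ω) μ) (hD : ∀ ω, D ω = Dp (Z ω) ω)
    (v : ι) (hs : MeasurableSet s) :
    μ {ω | D ω ∈ s ∧ Z ω = v} = μ (Z ⁻¹' {v}) * μ (Dp v ⁻¹' s) := by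
  have hset : {ω | D ω ∈ s ∧ Z ω = v} = Z ⁻¹' {v} ∩ Dp v ⁻¹' s := by
    ext ω
    simp only [mem_ofPred_eq, mem_inter_iff, mem_preimage, mem_singleton_iff, hD ω]
    exact ⟨fun ⟨h, hv⟩ => ⟨hv, hv ▸ h⟩, fun ⟨hv, h⟩ => ⟨hv ▸ h, hv⟩⟩
  have hindep_v : IndepFun Z (Dp v) μ := hindep.comp measurable_id (measurable_pi_apply v)
  rw [hset, hindep_v.measure_inter_preimage_eq_mul _ _ (measurableSet_singleton v) hs]

theorem toReal_measure_observed_div_eq [IsFiniteMeasure μ]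
    (hindep : IndepFun Z (fun ω v => Dp v ω) μ) (hD : ∀ ω, D ω = Dp (Z ω) ω)
    {v : ι} (hv : μ {ω | Z ω = v} ≠ 0) (hs : MeasurableSet s) :
    (μ {ω | D ω ∈ s ∧ Z ω = v}).toReal / (μ {ω | Z ω = v}).toReal =
      (μ (Dp v ⁻¹' s)).toReal := by
  have hv_real : (μ {ω | Z ω = v}).toReal ≠ 0 := ENNReal.toReal_ne_zero.mpr ⟨hv, measure_ne_top _ _⟩
  rw [measure_observed_inter_eq_mul hindep hD v hs, ENNReal.toReal_mul]
  exact mul_div_cancel_left₀ _ hv_real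

end PotentialOutcomes

theorem stmt15_general {Ω : Type*} [MeasureSpace Ω] [IsProbabilityMeasure (ℙ : Measure Ω)]
    {L : ℕ}
    (Dp : (Fin L → ℝ) → Ω → ℝ)            -- potential treatments
    (Z : Ω → (Fin L → ℝ))
    (za zb : Fin L → ℝ)       -- za = (z_l^k, z_{-l}), zb = (z_l^{k+1}, z_{-l})
    (hzapos : 0 < ℙ {ω | Z ω = za}) (hzbpos : 0 < ℙ {ω | Z ω = zb})
    -- random assignment: Z independent of the potential treatments
    (hindep : IndepFun Z (fun ω => (fun v : Fin L → ℝ => Dp v ω)) ℙ)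
    -- partial monotonicity
    (hmono : ∀ᵐ ω ∂(ℙ : Measure Ω), Dp za ω ≤ Dp zb ω)
    (D : Ω → ℝ) (hD : ∀ ω, D ω = Dp (Z ω) ω) :
    ∀ c : ℝ,
      (ℙ {ω | D ω ≤ c ∧ Z ω = zb}).toReal / (ℙ {ω | Z ω = zb}).toReal ≤
      (ℙ {ω | D ω ≤ c ∧ Z ω = za}).toReal / (ℙ {ω | Z ω = za}).toReal := by
  intro c
  have hcdf (v : Fin L → ℝ) (hv : ℙ {ω | Z ω = v} ≠ 0) :
      (ℙ {ω | D ω ≤ c ∧ Z ω = v}).toReal / (ℙ {ω | Z ω = v}).toReal =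
        (ℙ (Dp v ⁻¹' Iic c)).toReal :=
    toReal_measure_observed_div_eq hindep hD hv measurableSet_Iic
  rw [hcdf za hzapos.ne', hcdf zb hzbpos.ne']
  refine ENNReal.toReal_mono (measure_ne_top _ _) (measure_mono_ae ?_)
  filter_upwards [hmono] with ω hω hωb
  exact hω.trans hωb

/-- Under partial IV validity, for all `c ∈ ℝ`:
`ℙ(D ≤ c | Z = (z_l^k, z_{-l})) ≥ ℙ(D ≤ c | Z = (z_l^{k+1}, z_{-l}))`. -/
theorem stmt15 {Ω : Type*} [MeasureSpace Ω] [IsProbabilityMeasure (ℙ : Measure Ω)]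
    {L : ℕ} (𝒟 : Finset ℝ)
    (Dp : (Fin L → ℝ) → Ω → ℝ)            -- potential treatments
    (Z : Ω → (Fin L → ℝ))
    (l : Fin L) (za zb : Fin L → ℝ)       -- za = (z_l^k, z_{-l}), zb = (z_l^{k+1}, z_{-l})
    (hsame : ∀ j : Fin L, j ≠ l → za j = zb j)
    (hDp : ∀ v, Measurable (Dp v)) (hZ : Measurable Z)
    (hval : ∀ v ω, Dp v ω ∈ 𝒟)
    (hzapos : 0 < ℙ {ω | Z ω = za}) (hzbpos : 0 < ℙ {ω | Z ω = zb})
    -- random assignment: Z independent of the potential treatments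
    (hindep : IndepFun Z (fun ω => (fun v : Fin L → ℝ => Dp v ω)) ℙ)
    -- partial monotonicity
    (hmono : ∀ᵐ ω ∂(ℙ : Measure Ω), Dp za ω ≤ Dp zb ω)
    (D : Ω → ℝ) (hD : ∀ ω, D ω = Dp (Z ω) ω) :
    ∀ c : ℝ,
      (ℙ {ω | D ω ≤ c ∧ Z ω = zb}).toReal / (ℙ {ω | Z ω = zb}).toReal ≤
      (ℙ {ω | D ω ≤ c ∧ Z ω = za}).toReal / (ℙ {ω | Z ω = za}).toReal :=
  stmt15_general Dp Z za zb hzapos hzbpos hindep hmono D hD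
end
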